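/- arXiv:2206.12135 — 4 statements merged into one kernel-verified Lean document; each statement's English description precedes it below -/
import Mathlib

section
/- Let τ be a vocabulary consisting of finitely many constant symbols a_1,…,a_ℓ, finitely many unary relation symbols Ū, and finitely many binary relation symbols R̄, and let φ be a first-order sentence over τ. Then there exist a natural number r depending only on τ, a vocabulary τ' consisting of the binary relation symbols R̄ together with a finite set of unary relation symbols Ū' containing Ū and no constant symbols, and first-order sentences ψ_1,…,ψ_r over τ', such that for every n ∈ ℕ one has f_φ(n) = Σ_{i=1}^r Sp_{ψ_i}(n) (equality of natural numbers, not merely a modular equality). -/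
open FirstOrder Language

/-- A purely relational language with relation symbols `Rel k` of arity `k`. -/
def relLang (Rel : ℕ → Type) : Language :=
  ⟨fun _ => Empty, Rel⟩

/-- A language with constant symbols indexed by `Fin ℓ`, relation symbols `Rel k`
of arity `k`, and no other non-logical symbols. -/
def cLang (ℓ : ℕ) (Rel : ℕ → Type) : Language :=
  ⟨fun k => match k with | 0 => Fin ℓ | _ + 1 => Empty, Rel⟩

/-- The `relLang Rel`-structure on `M` determined by an interpretation `S`
of the relation symbols. -/
def relLang.mkStructure {Rel : ℕ → Type} {M : Type}
    (S : ∀ k, Rel k → (Fin k → M) → Prop) : (relLang Rel).Structure M where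
  funMap := fun f _ => f.elim
  RelMap := fun {k} r v => S k r v

/-- The `cLang ℓ Rel`-structure on `M` determined by an interpretation `c` of the
constant symbols and an interpretation `S` of the relation symbols. -/
def cLang.mkStructure {ℓ : ℕ} {Rel : ℕ → Type} {M : Type}
    (c : Fin ℓ → M) (S : ∀ k, Rel k → (Fin k → M) → Prop) :
    (cLang ℓ Rel).Structure M where
  funMap := fun {k} f _ =>
    match k, f with
    | 0, i => c i
  RelMap := fun {k} r v => S k r v

/-- `Sp_φ(n)`: the number of interpretations of the relation symbols on `[n]`
satisfying the sentence `φ` of a relational language. -/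
noncomputable def spCount {Rel : ℕ → Type} (φ : (relLang Rel).Sentence) (n : ℕ) : ℕ :=
  Nat.card { S : ∀ k, Rel k → (Fin k → Fin n) → Prop //
    letI := relLang.mkStructure S
    Fin n ⊨ φ }

/-- `f_φ(n)`: the number of interpretations of the relation symbols on `[n + ℓ]`
satisfying `φ`, where the `i`-th (hard-wired) constant is interpreted as `n + i`. -/
noncomputable def fCount (ℓ : ℕ) {Rel : ℕ → Type} (φ : (cLang ℓ Rel).Sentence) (n : ℕ) : ℕ :=
  Nat.card { S : ∀ k, Rel k → (Fin k → Fin (n + ℓ)) → Prop //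
    letI := cLang.mkStructure (fun i => Fin.natAdd n i) S
    Fin (n + ℓ) ⊨ φ }

/-- Relation symbols: `z` nullary, `u` unary, `b` binary, none of higher arity. -/
def rels012 (z u b : ℕ) : ℕ → Type := fun k =>
  match k with
  | 0 => Fin z
  | 1 => Fin u
  | 2 => Fin b
  | _ => Empty

/-!
Split `[n + ℓ]` into `[n]` and the `ℓ` constants. An interpretation of `τ` on `[n + ℓ]` is the
same as its restriction `D` to the constants (finitely many possibilities, independent of `n`)
together with a `τ'`-structure on `[n]`, whose extra unary predicates record `R(c_i, x)` and
`R(x, c_i)`. For fixed `D`, `φ` becomes a `τ'`-sentence `ψ_D` by splitting every quantifier into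
a quantifier over `[n]` and a conjunction over the constants, and by evaluating atoms among
constants with `D`; summing over `D` gives `f_φ(n) = ∑_D Sp_{ψ_D}(n)`.
-/

open Classical in
noncomputable def ofProp {L : Language} {α : Type*} {n : ℕ} (p : Prop) : L.BoundedFormula α n :=
  if p then ⊤ else ⊥

@[simp]
lemma realize_ofProp {L : Language} {M : Type*} [L.Structure M] {α : Type*} {n : ℕ}
    (p : Prop) (v : α → M) (xs : Fin n → M) :
    (ofProp p : L.BoundedFormula α n).Realize v xs ↔ p := by
  by_cases h : p <;> simp [ofProp, h]

lemma card_subtype_eq_sum_card_of_equiv_prod {X ι Y : Type*} [Fintype ι] [Finite Y]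
    (e : X ≃ ι × Y) {P : X → Prop} {Q : ι → Y → Prop} (h : ∀ x, P x ↔ Q (e x).1 (e x).2) :
    Nat.card {x // P x} = ∑ i, Nat.card {y // Q i y} := by
  rw [Nat.card_congr ((e.subtypeEquiv h).trans (Equiv.subtypeProdEquivSigmaSubtype Q)),
    Nat.card_sigma]

abbrev Interp (u b : ℕ) (M : Type) := ∀ k, rels012 0 u b k → (Fin k → M) → Prop

instance Interp.finite (u b : ℕ) (M : Type) [Finite M] : Finite (Interp u b M) := by
  refine Finite.of_injective (β := (Fin u → (Fin 1 → M) → Prop) × (Fin b → (Fin 2 → M) → Prop))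
    (fun S => (S 1, S 2)) fun S T h => ?_
  obtain ⟨h1, h2⟩ := Prod.mk.inj h
  funext k r
  match k, r with
  | 0, r => exact r.elim0
  | 1, r => exact congrFun h1 r
  | 2, r => exact congrFun h2 r
  | _ + 3, r => exact r.elim

@[simp]
lemma relLang.relMap_mkStructure {Rel : ℕ → Type} {M : Type}
    (S : ∀ k, Rel k → (Fin k → M) → Prop) {k : ℕ} (r : (relLang Rel).Relations k) (v : Fin k → M) :
    @Structure.RelMap (relLang Rel) M (relLang.mkStructure S) k r v ↔ S k r v := Iff.rfl

section HardwiredConstants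

variable (ℓ u b : ℕ)

abbrev srcLang : Language := cLang ℓ (rels012 0 u b)

abbrev tgtLang : Language := relLang (rels012 0 (u + (b * ℓ + b * ℓ)) b)

/-- `inl r` is the old unary `U_r`; `inr (inl (r, i))` stands for `x ↦ R_r(c_i, x)` and
`inr (inr (r, i))` for `x ↦ R_r(x, c_i)`. -/
def unarySym : Fin u ⊕ (Fin b × Fin ℓ) ⊕ (Fin b × Fin ℓ) ≃ (tgtLang ℓ u b).Relations 1 :=
  (Equiv.sumCongr (Equiv.refl _)
    ((Equiv.sumCongr finProdFinEquiv finProdFinEquiv).trans finSumFinEquiv)).trans finSumFinEquiv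

def binarySym (r : (srcLang ℓ u b).Relations 2) : (tgtLang ℓ u b).Relations 2 := r

abbrev ConstData := (Fin u → Fin ℓ → Prop) × (Fin b → Fin ℓ → Fin ℓ → Prop)

variable {ℓ u b} {N : ℕ}

def glue (D : ConstData ℓ u b) (S' : Interp (u + (b * ℓ + b * ℓ)) b (Fin N)) :
    Interp u b (Fin (N + ℓ))
  | 0, r, _ => r.elim0
  | 1, r, w =>
      match finSumFinEquiv.symm (w 0) with
      | .inl x => S' 1 (unarySym ℓ u b (.inl r)) ![x]
      | .inr i => D.1 r i
  | 2, r, w =>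
      match finSumFinEquiv.symm (w 0), finSumFinEquiv.symm (w 1) with
      | .inl x, .inl y => S' 2 (binarySym ℓ u b r) ![x, y]
      | .inr i, .inl y => S' 1 (unarySym ℓ u b (.inr (.inl (r, i)))) ![y]
      | .inl x, .inr j => S' 1 (unarySym ℓ u b (.inr (.inr (r, j)))) ![x]
      | .inr i, .inr j => D.2 r i j
  | _ + 3, r, _ => r.elim

def constData (S : Interp u b (Fin (N + ℓ))) : ConstData ℓ u b :=
  (fun r i => S 1 r ![Fin.natAdd N i], fun r i j => S 2 r ![Fin.natAdd N i, Fin.natAdd N j])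

def trace (S : Interp u b (Fin (N + ℓ))) : Interp (u + (b * ℓ + b * ℓ)) b (Fin N)
  | 0, q, _ => q.elim0
  | 1, q, w =>
      match (unarySym ℓ u b).symm q with
      | .inl r => S 1 r ![Fin.castAdd ℓ (w 0)]
      | .inr (.inl (r, i)) => S 2 r ![Fin.natAdd N i, Fin.castAdd ℓ (w 0)]
      | .inr (.inr (r, j)) => S 2 r ![Fin.castAdd ℓ (w 0), Fin.natAdd N j]
  | 2, r, w => S 2 r ![Fin.castAdd ℓ (w 0), Fin.castAdd ℓ (w 1)]
  | _ + 3, r, _ => r.elim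

lemma glue_constData_trace (S : Interp u b (Fin (N + ℓ))) :
    glue (constData S) (trace S) = S := by
  funext k r w
  match k, r with
  | 0, r => exact r.elim0
  | 1, r =>
    obtain ⟨a, rfl⟩ : ∃ a, w = ![a] := ⟨w 0, (FinVec.etaExpand_eq w).symm⟩
    induction a using Fin.addCases <;> simp [glue, constData, trace]
  | 2, r =>
    obtain ⟨a₁, a₂, rfl⟩ : ∃ a₁ a₂, w = ![a₁, a₂] := ⟨w 0, w 1, (FinVec.etaExpand_eq w).symm⟩
    induction a₁ using Fin.addCases <;> induction a₂ using Fin.addCases <;>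
      simp [glue, constData, trace, binarySym]
  | _ + 3, r => exact r.elim

lemma constData_glue (D : ConstData ℓ u b) (S' : Interp (u + (b * ℓ + b * ℓ)) b (Fin N)) :
    constData (glue D S') = D := by
  simp [glue, constData]

lemma trace_glue (D : ConstData ℓ u b) (S' : Interp (u + (b * ℓ + b * ℓ)) b (Fin N)) :
    trace (glue D S') = S' := by
  funext k q w
  match k, q with
  | 0, q => exact q.elim0
  | 1, q =>
    obtain ⟨q, rfl⟩ := (unarySym ℓ u b).surjective q
    obtain ⟨x, rfl⟩ : ∃ x, w = ![x] := ⟨w 0, (FinVec.etaExpand_eq w).symm⟩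
    rcases q with r | ⟨r, i⟩ | ⟨r, j⟩ <;> simp [glue, trace]
  | 2, r =>
    obtain ⟨x, y, rfl⟩ : ∃ x y, w = ![x, y] := ⟨w 0, w 1, (FinVec.etaExpand_eq w).symm⟩
    simp [glue, trace, binarySym]
  | _ + 3, r => exact r.elim

def interpEquiv :
    Interp u b (Fin (N + ℓ)) ≃ ConstData ℓ u b × Interp (u + (b * ℓ + b * ℓ)) b (Fin N) where
  toFun S := (constData S, trace S)
  invFun p := glue p.1 p.2
  left_inv := glue_constData_trace
  right_inv p := Prod.ext (constData_glue p.1 p.2) (trace_glue p.1 p.2)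

def liftSlot {m : ℕ} (xs : Fin m → Fin N) (a : Fin m ⊕ Fin ℓ) : Fin (N + ℓ) :=
  finSumFinEquiv (a.map xs id)

@[simp]
lemma liftSlot_inl {m : ℕ} (xs : Fin m → Fin N) (x : Fin m) :
    liftSlot xs (.inl x : Fin m ⊕ Fin ℓ) = Fin.castAdd ℓ (xs x) := by
  simp [liftSlot]

@[simp]
lemma liftSlot_inr {m : ℕ} (xs : Fin m → Fin N) (i : Fin ℓ) :
    liftSlot xs (.inr i) = Fin.natAdd N i := by
  simp [liftSlot]

@[simp]
lemma liftSlot_snoc_comp_map_castSucc {α : Type*} {m : ℕ} (xs : Fin m → Fin N) (x : Fin N)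
    (σ : α → Fin m ⊕ Fin ℓ) :
    liftSlot (Fin.snoc xs x) ∘ (Sum.map Fin.castSucc id ∘ σ) = liftSlot xs ∘ σ := by
  funext a
  simp only [Function.comp_apply]
  cases σ a <;> simp

def termSlot {n m : ℕ} (σ : Fin n → Fin m ⊕ Fin ℓ) :
    (srcLang ℓ u b).Term (Empty ⊕ Fin n) → Fin m ⊕ Fin ℓ
  | .var (.inl e) => e.elim
  | .var (.inr j) => σ j
  | @Term.func _ _ 0 i _ => .inr i
  | @Term.func _ _ (_ + 1) f _ => f.elim

noncomputable def eqSlots {m : ℕ} :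
    Fin m ⊕ Fin ℓ → Fin m ⊕ Fin ℓ → (tgtLang ℓ u b).BoundedFormula Empty m
  | .inl x, .inl y => Term.bdEqual (&x) (&y)
  | .inr i, .inr j => ofProp (i = j)
  | _, _ => ⊥

noncomputable def relSlots (D : ConstData ℓ u b) {m : ℕ} :
    ∀ {l : ℕ}, (srcLang ℓ u b).Relations l → (Fin l → Fin m ⊕ Fin ℓ) →
      (tgtLang ℓ u b).BoundedFormula Empty m
  | 0, r, _ => Fin.elim0 r
  | 1, r, a =>
      match a 0 with
      | .inl x => Relations.boundedFormula₁ (unarySym ℓ u b (.inl r)) (&x)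
      | .inr i => ofProp (D.1 r i)
  | 2, r, a =>
      match a 0, a 1 with
      | .inl x, .inl y => Relations.boundedFormula₂ (binarySym ℓ u b r) (&x) (&y)
      | .inr i, .inl y =>
          Relations.boundedFormula₁ (unarySym ℓ u b (.inr (.inl (r, i)))) (&y)
      | .inl x, .inr j =>
          Relations.boundedFormula₁ (unarySym ℓ u b (.inr (.inr (r, j)))) (&x)
      | .inr i, .inr j => ofProp (D.2 r i j)
  | _ + 3, r, _ => Empty.elim r

/-- `σ` records, for each bound variable of the source formula, whether it has become a
variable of the translation or is instantiated by a constant; a quantifier over the whole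
universe becomes a quantifier over the non-constant elements and one conjunct per constant. -/
noncomputable def elimConsts (D : ConstData ℓ u b) :
    ∀ {n}, (srcLang ℓ u b).BoundedFormula Empty n →
      ∀ {m}, (Fin n → Fin m ⊕ Fin ℓ) → (tgtLang ℓ u b).BoundedFormula Empty m
  | _, .falsum, _, _ => ⊥
  | _, .equal t₁ t₂, _, σ => eqSlots (termSlot σ t₁) (termSlot σ t₂)
  | _, .rel R ts, _, σ => relSlots D R fun i => termSlot σ (ts i)
  | _, .imp φ ψ, _, σ => (elimConsts D φ σ).imp (elimConsts D ψ σ)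
  | _, .all φ, m, σ =>
      (elimConsts D φ (Fin.snoc (Sum.map Fin.castSucc id ∘ σ) (.inl (Fin.last m)))).all ⊓
        BoundedFormula.iInf fun i => elimConsts D φ (Fin.snoc σ (.inr i))

lemma realize_termSlot (S : Interp u b (Fin (N + ℓ))) {n m : ℕ} (σ : Fin n → Fin m ⊕ Fin ℓ)
    (xs : Fin m → Fin N) (t : (srcLang ℓ u b).Term (Empty ⊕ Fin n)) :
    (letI := cLang.mkStructure (fun i => Fin.natAdd N i) S;
      t.realize (Sum.elim Empty.elim (liftSlot xs ∘ σ))) = liftSlot xs (termSlot σ t) :=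
  match t with
  | .var (.inl e) => e.elim
  | .var (.inr _) => rfl
  | @Term.func _ _ 0 i _ => (liftSlot_inr xs i).symm
  | @Term.func _ _ (_ + 1) f _ => f.elim

lemma realize_eqSlots (S' : Interp (u + (b * ℓ + b * ℓ)) b (Fin N)) {m : ℕ}
    (a₁ a₂ : Fin m ⊕ Fin ℓ) (xs : Fin m → Fin N) :
    (letI := relLang.mkStructure S';
      (eqSlots a₁ a₂ : (tgtLang ℓ u b).BoundedFormula Empty m).Realize Empty.elim xs) ↔
      liftSlot xs a₁ = liftSlot xs a₂ := by
  rcases a₁ with x | i <;> rcases a₂ with y | j <;> simp [eqSlots, Fin.ext_iff] <;> omega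

lemma realize_relSlots (D : ConstData ℓ u b) (S' : Interp (u + (b * ℓ + b * ℓ)) b (Fin N))
    {m l : ℕ} (r : (srcLang ℓ u b).Relations l) (a : Fin l → Fin m ⊕ Fin ℓ) (xs : Fin m → Fin N) :
    (letI := relLang.mkStructure S';
      (relSlots D r a).Realize Empty.elim xs) ↔ glue D S' l r (liftSlot xs ∘ a) := by
  match l, r with
  | 0, r => exact r.elim0
  | 1, r =>
    obtain ⟨a, rfl⟩ : ∃ a₀, a = ![a₀] := ⟨a 0, (FinVec.etaExpand_eq a).symm⟩
    rcases a with x | i <;> simp [relSlots, glue]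
  | 2, r =>
    obtain ⟨a₁, a₂, rfl⟩ : ∃ a₁ a₂, a = ![a₁, a₂] := ⟨a 0, a 1, (FinVec.etaExpand_eq a).symm⟩
    rcases a₁ with x | i <;> rcases a₂ with y | j <;> simp [relSlots, glue]
  | _ + 3, r => exact r.elim

lemma realize_elimConsts (D : ConstData ℓ u b) (S' : Interp (u + (b * ℓ + b * ℓ)) b (Fin N))
    {n : ℕ} (φ : (srcLang ℓ u b).BoundedFormula Empty n) {m : ℕ} (σ : Fin n → Fin m ⊕ Fin ℓ)
    (xs : Fin m → Fin N) :
    (letI := relLang.mkStructure S';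
      (elimConsts D φ σ).Realize Empty.elim xs) ↔
    (letI := cLang.mkStructure (fun i => Fin.natAdd N i) (glue D S');
      φ.Realize Empty.elim (liftSlot xs ∘ σ)) := by
  let := relLang.mkStructure S'
  let := cLang.mkStructure (fun i => Fin.natAdd N i) (glue D S')
  induction φ generalizing m with
  | falsum => exact Iff.rfl
  | equal t₁ t₂ =>
    change _ ↔ t₁.realize _ = t₂.realize _
    rw [elimConsts, realize_eqSlots, realize_termSlot, realize_termSlot]
  | rel R ts =>
    rw [elimConsts, realize_relSlots]
    change _ ↔ glue D S' _ R fun i => (ts i).realize _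
    simp only [realize_termSlot]
    rfl
  | imp φ ψ ihφ ihψ =>
    simp only [elimConsts, BoundedFormula.realize_imp, ihφ, ihψ]
  | all φ ih =>
    simp [elimConsts, ih, Fin.forall_fin_add (m := N), Fin.comp_snoc]

lemma realize_elimConsts_sentence (D : ConstData ℓ u b)
    (S' : Interp (u + (b * ℓ + b * ℓ)) b (Fin N)) (φ : (srcLang ℓ u b).Sentence) :
    (letI := relLang.mkStructure S';
      Fin N ⊨ (elimConsts D φ Fin.elim0 : (tgtLang ℓ u b).Sentence)) ↔
    (letI := cLang.mkStructure (fun i => Fin.natAdd N i) (glue D S');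
      Fin (N + ℓ) ⊨ φ) := by
  unfold Sentence.Realize Formula.Realize
  convert realize_elimConsts D S' φ Fin.elim0 default

theorem fCount_eq_sum_spCount (φ : (srcLang ℓ u b).Sentence) (n : ℕ) :
    fCount ℓ φ n =
      ∑ D : ConstData ℓ u b, spCount (elimConsts D φ Fin.elim0 : (tgtLang ℓ u b).Sentence) n := by
  unfold fCount spCount
  refine card_subtype_eq_sum_card_of_equiv_prod interpEquiv fun S => ?_
  rw [realize_elimConsts_sentence, show glue (interpEquiv S).1 (interpEquiv S).2 = S from glue_constData_trace S]

end HardwiredConstants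

/-- **Elimination of hard-wired constants (many-sentence version).**
For a vocabulary τ with ℓ constant symbols, u unary and b binary relation symbols,
there are r (depending only on τ) and a relational vocabulary τ' consisting of the
b binary symbols together with u' ≥ u unary symbols and no constants, such that every
first-order sentence φ over τ admits first-order sentences ψ₁,…,ψ_r over τ' with
f_φ(n) = Σ_{i=1}^r Sp_{ψ_i}(n) for all n (genuine equality, not merely modular). -/
theorem elimination_of_hardwired_constants (ℓ u b : ℕ) :
    ∃ (r u' : ℕ), u ≤ u' ∧
      ∀ φ : (cLang ℓ (rels012 0 u b)).Sentence,
        ∃ ψ : Fin r → (relLang (rels012 0 u' b)).Sentence,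
          ∀ n : ℕ, fCount ℓ φ n = ∑ i : Fin r, spCount (ψ i) n := by
  refine ⟨Fintype.card (ConstData ℓ u b), u + (b * ℓ + b * ℓ), Nat.le_add_right _ _, fun φ => ?_⟩
  let e := Fintype.equivFin (ConstData ℓ u b)
  refine ⟨fun i => elimConsts (e.symm i) φ Fin.elim0, fun n => ?_⟩
  rw [fCount_eq_sum_spCount]
  exact (e.symm.sum_comp _).symm
end

section
/- Let τ be a vocabulary consisting of constant symbols a_1,…,a_ℓ with ℓ ≥ 1, unary relation symbols U_1,…,U_{ℓ_U}, and binary relation symbols R_1,…,R_{ℓ_R}, and let φ be a first-order sentence over τ. Let τ' be the vocabulary with constant symbols a_1,…,a_{ℓ−1}, unary relation symbols U_1,…,U_{ℓ_U} together with 2ℓ_R new unary relation symbols I_1,…,I_{ℓ_R}, O_1,…,O_{ℓ_R}, and the same binary relation symbols R_1,…,R_{ℓ_R}. Then there exist r = 2^{ℓ_U + ℓ_R} first-order sentences ψ_1,…,ψ_r over τ' such that for every n ∈ ℕ one has f_φ(n) = Σ_{i=1}^r f_{ψ_i}(n). -/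
open FirstOrder Language

/-! Write `c` for the element interpreting the last constant. An interpretation on `[n + ℓ + 1]`
is the same as the `u + b` truth values of `U_j c` and `R_r c c` together with an interpretation
on `[n + ℓ]` of the larger vocabulary, in which `I_r x` records `R_r x c` and `O_r x` records
`R_r c x`. Splitting each quantifier of `φ` into the cases `x = c` and `x ≠ c`, and resolving
every atom that mentions `c` through this dictionary, turns `φ` into a sentence `ψ_g` for each
choice `g` of the truth values; `ψ_g` holds in the small interpretation exactly when `φ` holds in
the large one, so the count of `φ` is the sum of the counts of the `ψ_g`. -/

namespace RemoveConstant

variable {ℓ u b m : ℕ} {M : Type}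

abbrev Interp (u b : ℕ) (M : Type) : Type := ∀ k, rels012 0 u b k → (Fin k → M) → Prop

namespace Interp

def mk (U : Fin u → M → Prop) (B : Fin b → M → M → Prop) : Interp u b M
  | 0 => fun r _ => (r : Fin 0).elim0
  | 1 => fun j x => U j (x 0)
  | 2 => fun r x => B r (x 0) (x 1)
  | _ + 3 => fun r _ => (r : Empty).elim

def unary (S : Interp u b M) (j : Fin u) (x : M) : Prop := S 1 j ![x]

def binary (S : Interp u b M) (r : Fin b) (x y : M) : Prop := S 2 r ![x, y]

@[simp] lemma unary_mk (U : Fin u → M → Prop) (B : Fin b → M → M → Prop) :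
    (mk U B).unary = U := rfl

@[simp] lemma binary_mk (U : Fin u → M → Prop) (B : Fin b → M → M → Prop) :
    (mk U B).binary = B := rfl

lemma ext {S T : Interp u b M} (hU : S.unary = T.unary) (hB : S.binary = T.binary) :
    S = T := by
  funext k r x
  match k with
  | 0 => exact (r : Fin 0).elim0
  | 1 => rw [← FinVec.etaExpand_eq x]; exact congrFun (congrFun hU r) (x 0)
  | 2 => rw [← FinVec.etaExpand_eq x]; exact congrFun (congrFun (congrFun hB r) (x 0)) (x 1)
  | _ + 3 => exact (r : Empty).elim

def equivProd : Interp u b M ≃ (Fin u → M → Prop) × (Fin b → M → M → Prop) where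
  toFun S := (S.unary, S.binary)
  invFun p := mk p.1 p.2
  left_inv _ := ext rfl rfl
  right_inv _ := rfl

instance [Finite M] : Finite (Interp u b M) := .of_equiv _ equivProd.symm

end Interp

/-- The unary symbols of the smaller vocabulary: the old `U_j`, then `I_r`, then `O_r`. -/
def unarySymbols : Fin u ⊕ Fin b ⊕ Fin b ≃ Fin (u + 2 * b) :=
  (Equiv.sumCongr (Equiv.refl _) (finSumFinEquiv.trans (finCongr (two_mul b).symm))).trans
    finSumFinEquiv

def extend (g : Fin u ⊕ Fin b → Bool) (S : Interp (u + 2 * b) b (Fin m)) :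
    Interp u b (Fin (m + 1)) :=
  Interp.mk
    (fun j => Fin.lastCases (g (.inl j)) (S.unary (unarySymbols (.inl j))))
    (fun r => Fin.lastCases
      (Fin.lastCases (g (.inr r)) (S.unary (unarySymbols (.inr (.inr r)))))
      (fun x => Fin.lastCases (S.unary (unarySymbols (.inr (.inl r))) x) (S.binary r x)))

def restrict (S : Interp u b (Fin (m + 1))) : Interp (u + 2 * b) b (Fin m) :=
  Interp.mk
    (fun q x => match unarySymbols.symm q with
      | .inl j => S.unary j x.castSucc
      | .inr (.inl r) => S.binary r x.castSucc (Fin.last m)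
      | .inr (.inr r) => S.binary r (Fin.last m) x.castSucc)
    (fun r x y => S.binary r x.castSucc y.castSucc)

open Classical in
noncomputable def bitsAtLast (S : Interp u b (Fin (m + 1))) : Fin u ⊕ Fin b → Bool
  | .inl j => decide (S.unary j (Fin.last m))
  | .inr r => decide (S.binary r (Fin.last m) (Fin.last m))

noncomputable def splitAtLast :
    Interp u b (Fin (m + 1)) ≃ (Fin u ⊕ Fin b → Bool) × Interp (u + 2 * b) b (Fin m) where
  toFun S := (bitsAtLast S, restrict S)
  invFun p := extend p.1 p.2
  left_inv S := by
    refine Interp.ext (funext₂ fun j x => ?_) (funext₃ fun r x y => ?_)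
    · induction x using Fin.lastCases <;> simp [extend, restrict, bitsAtLast]
    · induction x using Fin.lastCases <;> induction y using Fin.lastCases <;>
        simp [extend, restrict, bitsAtLast]
  right_inv := by
    rintro ⟨g, S⟩
    refine Prod.ext (funext fun p => ?_) (Interp.ext (funext₂ fun q x => ?_) ?_)
    · rcases p with j | r <;> simp [extend, bitsAtLast]
    · obtain ⟨p, rfl⟩ := unarySymbols.surjective q
      rcases p with j | r | r <;> simp [extend, restrict]
    · simp [extend, restrict]

section Translation

variable {Rel Rel' : ℕ → Type} {α : Type}

/-- Under `f`, a bound variable `i` of the old formula is the removed element if `f i = none`,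
and the new bound variable `p` if `f i = some p`. -/
def liftValuation {k m' : ℕ} (f : Fin k → Option (Fin m')) (xs : Fin m' → Fin m) :
    Fin k → Fin (m + 1) :=
  fun i => finSuccEquivLast.symm ((f i).map xs)

lemma liftValuation_snoc_none {k m' : ℕ} (f : Fin k → Option (Fin m')) (xs : Fin m' → Fin m) :
    liftValuation (Fin.snoc f none) xs = Fin.snoc (liftValuation f xs) (Fin.last m) := by
  funext i
  induction i using Fin.lastCases <;> simp [liftValuation]

lemma liftValuation_snoc_some {k m' : ℕ} (f : Fin k → Option (Fin m')) (xs : Fin m' → Fin m)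
    (y : Fin m) :
    liftValuation (Fin.snoc (Option.map Fin.castSucc ∘ f) (some (Fin.last m'))) (Fin.snoc xs y) =
      Fin.snoc (liftValuation f xs) y.castSucc := by
  funext i
  induction i using Fin.lastCases with
  | last => simp [liftValuation]
  | cast i => cases f i <;> simp [liftValuation]

@[simp] lemma realize_func_mkStructure {β : Type} (c : Fin ℓ → M)
    (S : ∀ k, Rel k → (Fin k → M) → Prop) (v : β → M) (i : (cLang ℓ Rel).Functions 0)
    (ts : Fin 0 → (cLang ℓ Rel).Term β) :
    @Term.realize _ _ (cLang.mkStructure c S) _ v (.func i ts) = c i := rfl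

/-- `none` when the term denotes the removed element, which is the value of the last constant. -/
def translateTerm {k m' : ℕ} (f : Fin k → Option (Fin m')) :
    (cLang (ℓ + 1) Rel).Term (α ⊕ Fin k) → Option ((cLang ℓ Rel').Term (α ⊕ Fin m'))
  | .var (.inl a) => some (.var (.inl a))
  | .var (.inr i) => (f i).map (.var ∘ .inr)
  | @Term.func _ _ 0 c _ =>
      (finSuccEquivLast (c : Fin (ℓ + 1))).map (Constants.term (L := cLang ℓ Rel'))
  | @Term.func _ _ (_ + 1) F _ => (F : Empty).elim

lemma realize_translateTerm (c : Fin ℓ → Fin m)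
    (S : ∀ k, Rel k → (Fin k → Fin (m + 1)) → Prop)
    (S' : ∀ k, Rel' k → (Fin k → Fin m) → Prop) {k m' : ℕ} (f : Fin k → Option (Fin m'))
    (v : α → Fin m) (xs : Fin m' → Fin m) (t : (cLang (ℓ + 1) Rel).Term (α ⊕ Fin k)) :
    @Term.realize _ _ (cLang.mkStructure (Fin.lastCases (Fin.last m) (Fin.castSucc ∘ c)) S) _
        (Sum.elim (Fin.castSucc ∘ v) (liftValuation f xs)) t =
      finSuccEquivLast.symm ((translateTerm f t).map
        (@Term.realize _ _ (cLang.mkStructure c S') _ (Sum.elim v xs))) := by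
  match t with
  | .var (.inl a) => simp [translateTerm]
  | .var (.inr i) => cases h : f i <;> simp [translateTerm, liftValuation, h]
  | @Term.func _ _ 0 c₀ _ =>
      simp only [translateTerm, realize_func_mkStructure]
      induction (c₀ : Fin (ℓ + 1)) using Fin.lastCases with
      | last =>
        rw [finSuccEquivLast_last, Fin.lastCases_last]
        exact finSuccEquivLast_symm_none.symm
      | cast i =>
        rw [finSuccEquivLast_castSucc, Fin.lastCases_castSucc]
        exact (finSuccEquivLast_symm_some (c i)).symm
  | @Term.func _ _ (_ + 1) F _ => exact (F : Empty).elim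

def translate (g : Fin u ⊕ Fin b → Bool) : ∀ {k m' : ℕ}, (Fin k → Option (Fin m')) →
    (cLang (ℓ + 1) (rels012 0 u b)).BoundedFormula α k →
      (cLang ℓ (rels012 0 (u + 2 * b) b)).BoundedFormula α m'
  | _, _, _, .falsum => ⊥
  | _, _, f, .equal t₁ t₂ =>
      match translateTerm f t₁, translateTerm f t₂ with
      | some s₁, some s₂ => s₁.bdEqual s₂
      | some _, none => ⊥
      | none, some _ => ⊥
      | none, none => ⊤
  | _, _, _, @BoundedFormula.rel _ _ _ 0 R _ => (R : Fin 0).elim0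
  | _, _, f, @BoundedFormula.rel _ _ _ 1 R ts =>
      match translateTerm f (ts 0) with
      | some s => Relations.boundedFormula₁ (unarySymbols (.inl R) : Fin (u + 2 * b)) s
      | none => if g (.inl R) then ⊤ else ⊥
  | _, _, f, @BoundedFormula.rel _ _ _ 2 R ts =>
      match translateTerm f (ts 0), translateTerm f (ts 1) with
      | some s₁, some s₂ => Relations.boundedFormula₂ (R : Fin b) s₁ s₂
      | some s₁, none =>
          Relations.boundedFormula₁ (unarySymbols (.inr (.inl R)) : Fin (u + 2 * b)) s₁
      | none, some s₂ =>
          Relations.boundedFormula₁ (unarySymbols (.inr (.inr R)) : Fin (u + 2 * b)) s₂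
      | none, none => if g (.inr R) then ⊤ else ⊥
  | _, _, _, @BoundedFormula.rel _ _ _ (_ + 3) R _ => (R : Empty).elim
  | _, _, f, .imp θ₁ θ₂ => (translate g f θ₁).imp (translate g f θ₂)
  | _, _, f, .all θ =>
      translate g (Fin.snoc f none) θ ⊓
        (translate g (Fin.snoc (Option.map Fin.castSucc ∘ f) (some (Fin.last _))) θ).all

section Realize

variable (c : Fin ℓ → Fin m) (g : Fin u ⊕ Fin b → Bool) (S : Interp (u + 2 * b) b (Fin m))
  {k m' : ℕ} (f : Fin k → Option (Fin m')) (v : α → Fin m) (xs : Fin m' → Fin m)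

lemma relMap_extend_one (d : Fin (ℓ + 1) → Fin (m + 1)) (R : Fin u)
    (x : Fin 1 → Fin (m + 1)) :
    @Structure.RelMap (cLang (ℓ + 1) (rels012 0 u b)) _
        (cLang.mkStructure d (extend g S)) 1 R x ↔
      Fin.lastCases (g (.inl R)) (S.unary (unarySymbols (.inl R))) (x 0) := Iff.rfl

lemma relMap_extend_two (d : Fin (ℓ + 1) → Fin (m + 1)) (R : Fin b)
    (x : Fin 2 → Fin (m + 1)) :
    @Structure.RelMap (cLang (ℓ + 1) (rels012 0 u b)) _
        (cLang.mkStructure d (extend g S)) 2 R x ↔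
      Fin.lastCases (motive := fun _ => Fin (m + 1) → Prop)
        (Fin.lastCases (g (.inr R)) (S.unary (unarySymbols (.inr (.inr R)))))
        (fun y => Fin.lastCases (S.unary (unarySymbols (.inr (.inl R))) y) (S.binary R y))
        (x 0) (x 1) := Iff.rfl

lemma realize_translate_rel₁ (R : Fin u)
    (ts : Fin 1 → (cLang (ℓ + 1) (rels012 0 u b)).Term (α ⊕ Fin k)) :
    @BoundedFormula.Realize _ _
        (cLang.mkStructure (Fin.lastCases (Fin.last m) (Fin.castSucc ∘ c)) (extend g S)) _ _
        (.rel (l := 1) R ts) (Fin.castSucc ∘ v) (liftValuation f xs) ↔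
      @BoundedFormula.Realize _ _ (cLang.mkStructure c S) _ _
        (translate g f (.rel (l := 1) R ts)) v xs := by
  simp only [BoundedFormula.Realize, relMap_extend_one, realize_translateTerm c (extend g S) S,
    translate]
  cases translateTerm f (ts 0)
  · cases g (.inl R) <;> simp
  · simp only [Option.map_some, finSuccEquivLast_symm_some, Fin.lastCases_castSucc]
    exact (@BoundedFormula.realize_rel₁ _ _ (cLang.mkStructure c S) _ _ _ _ _ _).symm

lemma realize_translate_rel₂ (R : Fin b)
    (ts : Fin 2 → (cLang (ℓ + 1) (rels012 0 u b)).Term (α ⊕ Fin k)) :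
    @BoundedFormula.Realize _ _
        (cLang.mkStructure (Fin.lastCases (Fin.last m) (Fin.castSucc ∘ c)) (extend g S)) _ _
        (.rel (l := 2) R ts) (Fin.castSucc ∘ v) (liftValuation f xs) ↔
      @BoundedFormula.Realize _ _ (cLang.mkStructure c S) _ _
        (translate g f (.rel (l := 2) R ts)) v xs := by
  simp only [BoundedFormula.Realize, relMap_extend_two, realize_translateTerm c (extend g S) S,
    translate]
  cases translateTerm f (ts 0) <;> cases translateTerm f (ts 1) <;>
    simp only [Option.map_some, Option.map_none, finSuccEquivLast_symm_some,
      finSuccEquivLast_symm_none, Fin.lastCases_castSucc, Fin.lastCases_last]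
  · cases g (.inr R) <;> simp
  · exact (@BoundedFormula.realize_rel₁ _ _ (cLang.mkStructure c S) _ _ _ _ _ _).symm
  · exact (@BoundedFormula.realize_rel₁ _ _ (cLang.mkStructure c S) _ _ _ _ _ _).symm
  · exact (@BoundedFormula.realize_rel₂ _ _ (cLang.mkStructure c S) _ _ _ _ _ _ _).symm

theorem realize_translate (θ : (cLang (ℓ + 1) (rels012 0 u b)).BoundedFormula α k) :
    @BoundedFormula.Realize _ _
        (cLang.mkStructure (Fin.lastCases (Fin.last m) (Fin.castSucc ∘ c)) (extend g S)) _ _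
        θ (Fin.castSucc ∘ v) (liftValuation f xs) ↔
      @BoundedFormula.Realize _ _ (cLang.mkStructure c S) _ _ (translate g f θ) v xs := by
  induction θ generalizing m' with
  | falsum => rfl
  | equal t₁ t₂ =>
    simp only [BoundedFormula.Realize, realize_translateTerm c (extend g S) S,
      Equiv.apply_eq_iff_eq, translate]
    cases translateTerm f t₁ <;> cases translateTerm f t₂ <;> simp
  | @rel _ l R ts =>
    match l, R with
    | 0, R => exact (R : Fin 0).elim0
    | 1, R => exact realize_translate_rel₁ c g S f v xs R ts
    | 2, R => exact realize_translate_rel₂ c g S f v xs R ts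
    | _ + 3, R => exact (R : Empty).elim
  | imp θ₁ θ₂ ih₁ ih₂ => exact imp_congr (ih₁ f xs) (ih₂ f xs)
  | all θ ih =>
    simp only [translate, BoundedFormula.realize_inf, BoundedFormula.realize_all]
    refine Fin.forall_fin_succ'.trans (and_comm.trans (and_congr ?_ (forall_congr' fun y => ?_)))
    · rw [← liftValuation_snoc_none]; exact ih _ xs
    · rw [← liftValuation_snoc_some]; exact ih _ _

end Realize

end Translation

def translateSentence (g : Fin u ⊕ Fin b → Bool)
    (φ : (cLang (ℓ + 1) (rels012 0 u b)).Sentence) :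
    (cLang ℓ (rels012 0 (u + 2 * b) b)).Sentence :=
  translate g (Fin.elim0 : Fin 0 → Option (Fin 0)) φ

theorem realize_translateSentence (c : Fin ℓ → Fin m) (g : Fin u ⊕ Fin b → Bool)
    (S : Interp (u + 2 * b) b (Fin m)) (φ : (cLang (ℓ + 1) (rels012 0 u b)).Sentence) :
    @Sentence.Realize _ (Fin (m + 1))
        (cLang.mkStructure (Fin.lastCases (Fin.last m) (Fin.castSucc ∘ c)) (extend g S)) φ ↔
      @Sentence.Realize _ _ (cLang.mkStructure c S) (translateSentence g φ) := by
  unfold Sentence.Realize Formula.Realize translateSentence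
  convert realize_translate c g S Fin.elim0 default default φ using 2

lemma natAdd_eq_lastCases (n : ℕ) :
    (fun i : Fin (ℓ + 1) => (Fin.natAdd n i : Fin (n + ℓ + 1))) =
      Fin.lastCases (Fin.last (n + ℓ)) (Fin.castSucc ∘ Fin.natAdd n) := by
  funext i
  induction i using Fin.lastCases <;> simp

theorem fCount_succ_eq_sum (φ : (cLang (ℓ + 1) (rels012 0 u b)).Sentence) (n : ℕ) :
    fCount (ℓ + 1) φ n = ∑ g, fCount ℓ (translateSentence g φ) n := by
  unfold fCount
  rw [natAdd_eq_lastCases, ← Nat.card_sigma]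
  refine Nat.card_congr ((Equiv.subtypeEquiv splitAtLast.symm fun p => ?_).symm.trans
    (Equiv.subtypeProdEquivSigmaSubtype fun g S => _))
  exact (realize_translateSentence _ p.1 p.2 φ).symm

end RemoveConstant

/-- **Removing a single hard-wired constant.**
Let τ have ℓ+1 constant symbols, u unary and b binary relation symbols, and let φ be a
first-order sentence over τ.  Let τ' have the constant symbols a₁,…,a_ℓ, the u original
unary symbols together with 2b new unary symbols (the I's and the O's), and the same b
binary symbols.  Then there are r = 2^(u+b) first-order sentences ψ₁,…,ψ_r over τ' with
f_φ(n) = Σ_{i=1}^r f_{ψ_i}(n) for all n. -/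
theorem remove_single_constant (ℓ u b : ℕ)
    (φ : (cLang (ℓ + 1) (rels012 0 u b)).Sentence) :
    ∃ ψ : Fin (2 ^ (u + b)) → (cLang ℓ (rels012 0 (u + 2 * b) b)).Sentence,
      ∀ n : ℕ, fCount (ℓ + 1) φ n = ∑ i : Fin (2 ^ (u + b)), fCount ℓ (ψ i) n := by
  let e : Fin (2 ^ (u + b)) ≃ (Fin u ⊕ Fin b → Bool) :=
    (Fintype.equivFinOfCardEq (by simp)).symm
  refine ⟨fun i => RemoveConstant.translateSentence (e i) φ, fun n => ?_⟩
  rw [RemoveConstant.fCount_succ_eq_sum]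
  exact (e.sum_comp _).symm
end

section
/- Let τ be a vocabulary consisting of finitely many constant symbols a_1,…,a_ℓ, finitely many nullary (arity-0) relation symbols Z̄, finitely many unary relation symbols Ū, and finitely many binary relation symbols R̄, and let φ be a first-order sentence over τ. Then there exists a vocabulary τ' with no constant symbols, consisting of a finite set of nullary relation symbols Z̄' containing Z̄, a finite set of unary relation symbols Ū' containing Ū, and the same binary relation symbols R̄, and a single first-order sentence φ' over τ', such that f_φ(n) = Sp_{φ'}(n) for all n ∈ ℕ. -/
open FirstOrder Language

/-! On the universe `[n + ℓ]` with `aᵢ = n + i`, an atom some of whose arguments are constants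
is the same as an atom of lower arity on `[n]`: `R(aᵢ)` and `R(aᵢ, aⱼ)` become nullary symbols,
`R(aᵢ, x)` and `R(x, aᵢ)` unary ones. This gives a bijection between the structures counted by
`f_φ(n)` and the structures on `[n]` of the expanded vocabulary. The sentence is translated
along it by splitting each quantifier `∀ x` over `[n + ℓ]` into `∀ x` over `[n]` together with
the `ℓ` instances `x = aᵢ`, remembering for every bound variable whether it stands for a
constant; an equation between a constant and an element of `[n]` becomes false. -/

namespace ConstantElimination

open Fin

abbrev Interp (Rel : ℕ → Type) (M : Type) : Type := ∀ k, Rel k → (Fin k → M) → Prop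

variable {ℓ n m : ℕ} {Rel : ℕ → Type} {γ β : Type}

def renameRels {Rel' : ℕ → Type} (e : ∀ k, Rel k → Rel' k) : relLang Rel →ᴸ relLang Rel' where
  onFunction _ f := f
  onRelation := e

theorem spCount_onSentence_renameRels {Rel' : ℕ → Type} (e : ∀ k, Rel k ≃ Rel' k)
    (φ : (relLang Rel).Sentence) (n : ℕ) :
    spCount ((renameRels fun k => e k).onSentence φ) n = spCount φ n := by
  refine Nat.card_congr
    ((Equiv.piCongrRight fun k => (e k).symm.arrowCongr (Equiv.refl _)).subtypeEquiv fun S' => ?_)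
  let := relLang.mkStructure S'
  let := relLang.mkStructure fun k r => S' k (e k r)
  have : (renameRels fun k => e k).IsExpansionOn (Fin n) := ⟨fun f => (nomatch f), fun _ _ => rfl⟩
  exact LHom.realize_onSentence (Fin n) _ φ

def expandedRels (ℓ : ℕ) (Rel : ℕ → Type) : ℕ → Type
  | 0 => Rel 0 ⊕ (Rel 1 × Fin ℓ) ⊕ (Rel 2 × Fin ℓ × Fin ℓ)
  | 1 => Rel 1 ⊕ (Rel 2 × Fin ℓ) ⊕ (Rel 2 × Fin ℓ)
  | 2 => Rel 2
  | _ + 3 => Empty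

def toExpanded (S : Interp Rel (Fin (n + ℓ))) : Interp (expandedRels ℓ Rel) (Fin n)
  | 0, .inl r, _ => S 0 r ![]
  | 0, .inr (.inl (r, i)), _ => S 1 r ![natAdd n i]
  | 0, .inr (.inr (r, i, i')), _ => S 2 r ![natAdd n i, natAdd n i']
  | 1, .inl r, v => S 1 r ![castAdd ℓ (v 0)]
  | 1, .inr (.inl (r, i)), v => S 2 r ![natAdd n i, castAdd ℓ (v 0)]
  | 1, .inr (.inr (r, i)), v => S 2 r ![castAdd ℓ (v 0), natAdd n i]
  | 2, r, v => S 2 r ![castAdd ℓ (v 0), castAdd ℓ (v 1)]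
  | _ + 3, r, _ => nomatch r

def decode (w : γ → Fin n) : Fin ℓ ⊕ γ → Fin (n + ℓ) :=
  Sum.elim (natAdd n) (castAdd ℓ ∘ w)

def encode (x : Fin (n + ℓ)) : Fin ℓ ⊕ Fin n := (finSumFinEquiv.symm x).swap

@[simp] lemma encode_natAdd (i : Fin ℓ) : encode (natAdd n i) = .inl i := by simp [encode]

@[simp] lemma encode_castAdd (x : Fin n) : encode (castAdd ℓ x) = .inr x := by simp [encode]

@[simp] lemma decode_id_encode (x : Fin (n + ℓ)) : decode id (encode x) = x := by
  induction x using Fin.addCases <;> simp [decode]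

lemma castAdd_ne_natAdd (x : Fin n) (i : Fin ℓ) : castAdd ℓ x ≠ natAdd n i :=
  Fin.ne_of_val_ne (by simp only [val_castAdd, val_natAdd]; omega)

lemma decode_comp_snoc_inl (σ : Fin m → Fin ℓ ⊕ β) (w : β → Fin n) (i : Fin ℓ) :
    decode w ∘ Fin.snoc σ (.inl i) = Fin.snoc (decode w ∘ σ) (natAdd n i) :=
  Fin.comp_snoc ..

lemma decode_comp_snoc_inr (σ : Fin m → Fin ℓ ⊕ β) (w : β → Fin n) (y : Fin n) :
    decode (Sum.elim w fun _ : Unit => y) ∘ Fin.snoc (Sum.map id Sum.inl ∘ σ) (.inr (.inr ())) =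
      Fin.snoc (decode w ∘ σ) (castAdd ℓ y) := by
  rw [Fin.comp_snoc]
  congr 1
  funext j
  simp only [Function.comp_apply]
  cases σ j <;> rfl

def resolveTerm (σ : Fin m → Fin ℓ ⊕ β) : (cLang ℓ Rel).Term (Empty ⊕ Fin m) → Fin ℓ ⊕ β
  | var (.inl e) => e.elim
  | var (.inr j) => σ j
  | func (l := 0) c _ => .inl c
  | func (l := _ + 1) f _ => nomatch f

lemma realize_resolveTerm (S : Interp Rel (Fin (n + ℓ))) (σ : Fin m → Fin ℓ ⊕ β) (w : β → Fin n)
    (t : (cLang ℓ Rel).Term (Empty ⊕ Fin m)) :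
    (letI := cLang.mkStructure (fun i => natAdd n i) S
     t.realize (Sum.elim default (decode w ∘ σ))) = decode w (resolveTerm σ t) := by
  match t with
  | var (.inl e) => exact e.elim
  | var (.inr _) => rfl
  | func (l := 0) _ _ => rfl
  | func (l := _ + 1) f _ => exact nomatch f

def translateEq : Fin ℓ ⊕ γ → Fin ℓ ⊕ γ → (relLang (expandedRels ℓ Rel)).Formula γ
  | .inl i, .inl i' => if i = i' then ⊤ else ⊥
  | .inr x, .inr y => Term.equal (var x) (var y)
  | _, _ => ⊥

lemma realize_translateEq [(relLang (expandedRels ℓ Rel)).Structure (Fin n)] (c d : Fin ℓ ⊕ γ)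
    (w : γ → Fin n) : (translateEq (Rel := Rel) c d).Realize w ↔ decode w c = decode w d := by
  rcases c with i | x <;> rcases d with i' | y
  · by_cases h : i = i' <;> simp [translateEq, decode, h]
  · simpa [translateEq, decode] using (castAdd_ne_natAdd (w y) i).symm
  · simpa [translateEq, decode] using castAdd_ne_natAdd (w x) i'
  · simp [translateEq, decode]

def atom {k : ℕ} (s : expandedRels ℓ Rel k) (xs : Fin k → γ) :
    (relLang (expandedRels ℓ Rel)).Formula γ :=
  Relations.formula (L := relLang (expandedRels ℓ Rel)) s fun i => var (xs i)

variable [∀ k, IsEmpty (Rel (k + 3))]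

def translateAtom : ∀ {k}, Rel k → (Fin k → Fin ℓ ⊕ γ) → (relLang (expandedRels ℓ Rel)).Formula γ
  | 0, r, _ => atom (k := 0) (.inl r) ![]
  | 1, r, a =>
    match a 0 with
    | .inl i => atom (k := 0) (.inr (.inl (r, i))) ![]
    | .inr x => atom (k := 1) (.inl r) ![x]
  | 2, r, a =>
    match a 0, a 1 with
    | .inl i, .inl i' => atom (k := 0) (.inr (.inr (r, i, i'))) ![]
    | .inl i, .inr x => atom (k := 1) (.inr (.inl (r, i))) ![x]
    | .inr x, .inl i => atom (k := 1) (.inr (.inr (r, i))) ![x]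
    | .inr x, .inr y => atom (k := 2) r ![x, y]
  | _ + 3, r, _ => isEmptyElim r

lemma realize_translateAtom (S : Interp Rel (Fin (n + ℓ))) {k : ℕ} (r : Rel k)
    (a : Fin k → Fin ℓ ⊕ γ) (w : γ → Fin n) :
    (letI := relLang.mkStructure (toExpanded S); (translateAtom r a).Realize w) ↔
      S k r (decode w ∘ a) := by
  match k, r with
  | 0, r => exact iff_of_eq (congrArg (S 0 r) (Subsingleton.elim _ _))
  | 1, r =>
    rw [show decode w ∘ a = ![decode w (a 0)] from funext fun x => by fin_cases x; rfl]
    rcases h : a 0 with i | x <;> simp only [translateAtom, h] <;> rfl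
  | 2, r =>
    rw [show decode w ∘ a = ![decode w (a 0), decode w (a 1)] from
      funext fun x => by fin_cases x <;> rfl]
    rcases h : a 0 with i | x <;> rcases h' : a 1 with i' | y <;>
      simp only [translateAtom, h, h'] <;> rfl
  | _ + 3, r => exact isEmptyElim r

-- Interpreting `r(v)` as the translated atom makes `left_inv` below an instance of
-- `realize_translateAtom`.
def ofExpanded (S' : Interp (expandedRels ℓ Rel) (Fin n)) : Interp Rel (Fin (n + ℓ)) :=
  fun _ r v => letI := relLang.mkStructure S'; (translateAtom r (encode ∘ v)).Realize id

def expandEquiv : Interp Rel (Fin (n + ℓ)) ≃ Interp (expandedRels ℓ Rel) (Fin n) where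
  toFun := toExpanded
  invFun := ofExpanded
  left_inv S := by
    funext k r v
    refine propext ((realize_translateAtom S r _ id).trans ?_)
    simp [Function.comp_def]
  right_inv S' := by
    funext k s v
    match k, s with
    | 0, s =>
      rcases s with r | ⟨r, i⟩ | ⟨r, i, i'⟩ <;>
        simp only [toExpanded, ofExpanded, translateAtom, Function.comp_apply,
          Matrix.cons_val_zero, Matrix.cons_val_one, encode_natAdd] <;>
        exact congrArg (S' 0 _) (Subsingleton.elim (α := Fin 0 → Fin n) _ _)
    | 1, s =>
      rcases s with r | ⟨r, i⟩ | ⟨r, i⟩ <;>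
        simp only [toExpanded, ofExpanded, translateAtom, Function.comp_apply,
          Matrix.cons_val_zero, Matrix.cons_val_one, encode_natAdd, encode_castAdd] <;>
        exact congrArg (S' 1 _) (funext fun x => by fin_cases x; rfl)
    | 2, r =>
      simp only [toExpanded, ofExpanded, translateAtom, Function.comp_apply,
        Matrix.cons_val_zero, Matrix.cons_val_one, encode_castAdd]
      exact congrArg (S' 2 _) (funext fun x => by fin_cases x <;> rfl)
    | _ + 3, s => exact nomatch s

-- `σ j = .inl i` records that the bound variable `j` is the constant `aᵢ`; the other bound
-- variables become free variables of the translation.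
noncomputable def translate : ∀ {m}, (cLang ℓ Rel).BoundedFormula Empty m → ∀ {β : Type},
    (Fin m → Fin ℓ ⊕ β) → (relLang (expandedRels ℓ Rel)).Formula β
  | _, .falsum, _, _ => ⊥
  | _, .equal t₁ t₂, _, σ => translateEq (resolveTerm σ t₁) (resolveTerm σ t₂)
  | _, .rel r ts, _, σ => translateAtom r fun i => resolveTerm σ (ts i)
  | _, .imp φ ψ, _, σ => (translate φ σ).imp (translate ψ σ)
  | _, .all φ, _, σ =>
    Formula.iAlls Unit (translate φ (Fin.snoc (Sum.map id Sum.inl ∘ σ) (.inr (.inr ())))) ⊓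
      Formula.iInf fun i => translate φ (Fin.snoc σ (.inl i))

lemma realize_translate (S : Interp Rel (Fin (n + ℓ))) (φ : (cLang ℓ Rel).BoundedFormula Empty m)
    (σ : Fin m → Fin ℓ ⊕ β) (w : β → Fin n) :
    (letI := cLang.mkStructure (fun i => natAdd n i) S; φ.Realize default (decode w ∘ σ)) ↔
      (letI := relLang.mkStructure (toExpanded S); (translate φ σ).Realize w) := by
  let := cLang.mkStructure (fun i => natAdd n i) S
  let := relLang.mkStructure (toExpanded S)
  induction φ generalizing β with
  | falsum => rfl
  | equal t₁ t₂ =>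
    rw [translate, realize_translateEq, ← realize_resolveTerm, ← realize_resolveTerm]
    rfl
  | rel r ts =>
    exact (iff_of_eq (congrArg (S _ r) (funext fun i => realize_resolveTerm S σ w (ts i)))).trans
      (realize_translateAtom S r _ w).symm
  | imp φ ψ ihφ ihψ =>
    simp only [translate, BoundedFormula.realize_imp, Formula.realize_imp, ihφ, ihψ]
  | all φ ih =>
    have hcast (y : Fin n) := ih (Fin.snoc (Sum.map id Sum.inl ∘ σ) (.inr (.inr ())))
      (Sum.elim w fun _ => y)
    simp only [decode_comp_snoc_inr] at hcast
    rw [translate, Formula.realize_inf, Formula.realize_iAlls, Formula.realize_iInf,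
      BoundedFormula.realize_all, Fin.forall_fin_add]
    refine and_congr ⟨fun h i => (hcast (i ())).1 (h _), fun h y => (hcast y).2 (h _)⟩
      (forall_congr' fun i => ?_)
    rw [← decode_comp_snoc_inl]
    exact ih _ _

theorem fCount_eq_spCount_translate (φ : (cLang ℓ Rel).Sentence) (n : ℕ) :
    fCount ℓ φ n = spCount (translate φ (Fin.elim0 : Fin 0 → Fin ℓ ⊕ Empty)) n := by
  refine Nat.card_congr (expandEquiv.subtypeEquiv fun S => ?_)
  have h := realize_translate S φ Fin.elim0 (default : Empty → Fin n)
  rwa [Subsingleton.elim (decode default ∘ Fin.elim0) default] at h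

instance (z u b k : ℕ) : IsEmpty (rels012 z u b (k + 3)) := inferInstanceAs (IsEmpty Empty)

def expandedRelsEquiv (ℓ z u b : ℕ) : ∀ k,
    expandedRels ℓ (rels012 z u b) k ≃ rels012 (z + (u * ℓ + b * (ℓ * ℓ))) (u + (b * ℓ + b * ℓ)) b k
  | 0 => ((Equiv.refl _).sumCongr ((finProdFinEquiv.sumCongr
      (((Equiv.refl _).prodCongr finProdFinEquiv).trans finProdFinEquiv)).trans
        finSumFinEquiv)).trans finSumFinEquiv
  | 1 => ((Equiv.refl _).sumCongr
      ((finProdFinEquiv.sumCongr finProdFinEquiv).trans finSumFinEquiv)).trans finSumFinEquiv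
  | 2 => Equiv.refl _
  | _ + 3 => Equiv.refl _

end ConstantElimination

/-- **Many-one reduction to the case without constants (arity ≤ 2, with nullary symbols).**
For a vocabulary τ with ℓ constant symbols, z nullary, u unary and b binary relation
symbols, and a first-order sentence φ over τ, there is a relational vocabulary τ'
(no constants) with z' ≥ z nullary symbols, u' ≥ u unary symbols and the same b binary
symbols, and a single first-order sentence φ' over τ', such that
f_φ(n) = Sp_{φ'}(n) for all n. -/
theorem many_one_reduction_no_constants (ℓ z u b : ℕ)
    (φ : (cLang ℓ (rels012 z u b)).Sentence) :
    ∃ (z' u' : ℕ), z ≤ z' ∧ u ≤ u' ∧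
      ∃ φ' : (relLang (rels012 z' u' b)).Sentence,
        ∀ n : ℕ, fCount ℓ φ n = spCount φ' n := by
  open ConstantElimination in
  exact ⟨_, _, Nat.le_add_right z _, Nat.le_add_right u _,
    (renameRels fun k => expandedRelsEquiv ℓ z u b k).onSentence
      (translate φ (Fin.elim0 : Fin 0 → Fin ℓ ⊕ Empty)),
    fun n => by rw [spCount_onSentence_renameRels, fCount_eq_spCount_translate]⟩
end

section
/- Let τ be a vocabulary consisting of constant symbols a_1,…,a_ℓ with ℓ ≥ 1 and relation symbols R_1,…,R_{ℓ_R} of arities ρ_1,…,ρ_{ℓ_R}, and let φ be a first-order sentence over τ. Let τ' be the vocabulary with constant symbols a_1,…,a_{ℓ−1} and, for each i ≤ ℓ_R and each subset A ⊆ [ρ_i], a relation symbol R_{i,A} of arity ρ_i − |A| (with R_{i,∅} identified with R_i). Then there exists a single first-order sentence φ' over τ' such that f_φ(n) = f_{φ'}(n) for all n ∈ ℕ; in particular τ' has the same maximum arity as τ and no new relation symbols of that maximum arity. -/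
open FirstOrder Language

/-- Relation symbols indexed by ι with arity function ρ : the symbols of arity k are
those i : ι with ρ i = k. -/
def arels {ι : Type} (ρ : ι → ℕ) : ℕ → Type := fun k => { i : ι // ρ i = k }

/-!
Split the universe `Fin (N + 1)` into `Fin N` and the point `Fin.last N` that interprets the
removed constant. A relation `R_i` on the large universe carries the same information as the
family `R_{i,B}` on the small one, where `R_{i,B}(w)` holds iff `R_i` holds at the tuple having
`Fin.last N` exactly at the positions in `B` and the entries of `w`, in order, elsewhere; this is
a bijection between the interpretations counted on the two sides. A sentence is translated along
it by recording, for each bound variable, whether it denotes `Fin.last N` or a point of `Fin N`: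
a quantifier splits into these two cases, an equality involving `Fin.last N` is decided
outright, and an atom `R_i(t)` becomes `R_{i,B}(t')`, where `B` is the set of positions of the
terms denoting `Fin.last N` and `t'` lists the others.
-/

namespace ConstantRemoval

section Fill

variable {K : ℕ} {M : Type*}

noncomputable def complEquiv (B : Finset (Fin K)) : Fin (K - B.card) ≃ {x // x ∈ Bᶜ} :=
  (Bᶜ.orderIsoOfFin (by simp [Finset.card_compl])).toEquiv

noncomputable def fill (B : Finset (Fin K)) (w : Fin (K - B.card) → M) (j : Fin K) : Option M :=
  if hj : j ∈ B then none else some (w ((complEquiv B).symm ⟨j, Finset.mem_compl.2 hj⟩))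

theorem fill_eq_none_iff {B : Finset (Fin K)} {w : Fin (K - B.card) → M} {j : Fin K} :
    fill B w j = none ↔ j ∈ B := by
  unfold fill
  split_ifs <;> simp_all

theorem fill_complEquiv (B : Finset (Fin K)) (w : Fin (K - B.card) → M) (j : Fin (K - B.card)) :
    fill B w (complEquiv B j) = some (w j) := by
  simp [fill, Finset.mem_compl.1 (complEquiv B j).2]

theorem fill_eq {B : Finset (Fin K)} {w : Fin (K - B.card) → M} {v : Fin K → Option M}
    (hB : ∀ j, v j = none ↔ j ∈ B) (hw : ∀ j, v (complEquiv B j) = some (w j)) :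
    fill B w = v := by
  funext j
  by_cases hj : j ∈ B
  · rw [fill_eq_none_iff.2 hj, (hB j).2 hj]
  · obtain ⟨j, rfl⟩ : ∃ j', (complEquiv B j' : Fin K) = j :=
      ⟨(complEquiv B).symm ⟨j, Finset.mem_compl.2 hj⟩, by simp⟩
    rw [fill_complEquiv, hw]

theorem fill_injective :
    Function.Injective fun p : Σ B : Finset (Fin K), Fin (K - B.card) → M => fill p.1 p.2 := by
  rintro ⟨B, w⟩ ⟨B', w'⟩ h
  dsimp only at h
  obtain rfl : B = B' := by
    ext j
    rw [← fill_eq_none_iff (w := w), ← fill_eq_none_iff (w := w'), h]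
  obtain rfl : w = w' :=
    funext fun j => Option.some_injective _ (by rw [← fill_complEquiv, h, fill_complEquiv])
  rfl

theorem fill_surjective :
    Function.Surjective fun p : Σ B : Finset (Fin K), Fin (K - B.card) → M => fill p.1 p.2 := by
  intro v
  let B : Finset (Fin K) := Finset.univ.filter fun j => (v j).isNone
  have hB : ∀ j, v j = none ↔ j ∈ B := by simp [B]
  refine ⟨⟨B, fun j => (v (complEquiv B j)).get ?_⟩, fill_eq hB fun j => by simp⟩
  exact Option.ne_none_iff_isSome.1 fun h => Finset.mem_compl.1 (complEquiv B j).2 ((hB _).1 h)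

noncomputable def fillEquiv : (Σ B : Finset (Fin K), Fin (K - B.card) → M) ≃ (Fin K → Option M) :=
  Equiv.ofBijective _ ⟨fill_injective, fill_surjective⟩

end Fill

section Interpretations

variable {ι : Type}

abbrev Interp (ρ : ι → ℕ) (M : Type) : Type := ∀ k, arels ρ k → (Fin k → M) → Prop

def interpEquivPi (ρ : ι → ℕ) (M : Type) : Interp ρ M ≃ ∀ i, (Fin (ρ i) → M) → Prop where
  toFun S i := S (ρ i) ⟨i, rfl⟩
  invFun T _ r v := T r.1 (v ∘ Fin.cast r.2)
  left_inv S := by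
    funext k r v
    obtain ⟨i, rfl⟩ := r
    rfl
  right_inv _ := rfl

abbrev splitArity (ρ : ι → ℕ) : (Σ i, Finset (Fin (ρ i))) → ℕ := fun p => ρ p.1 - p.2.card

noncomputable def interpSplitEquiv (ρ : ι → ℕ) (N : ℕ) :
    Interp ρ (Fin (N + 1)) ≃ Interp (splitArity ρ) (Fin N) :=
  let splitTuple (i : ι) :
      (Fin (ρ i) → Fin (N + 1)) ≃ Σ B : Finset (Fin (ρ i)), Fin (ρ i - B.card) → Fin N :=
    ((Equiv.refl _).arrowCongr finSuccEquivLast).trans fillEquiv.symm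
  (interpEquivPi ρ _).trans <|
    (Equiv.piCongrRight fun i =>
      ((splitTuple i).arrowCongr (Equiv.refl Prop)).trans (Equiv.piCurry fun _ _ => Prop)).trans <|
    (Equiv.piCurry fun i (B : Finset (Fin (ρ i))) => (Fin (ρ i - B.card) → Fin N) → Prop).symm.trans
      (interpEquivPi (splitArity ρ) _).symm

theorem interpSplitEquiv_apply {ρ : ι → ℕ} {N : ℕ} (S : Interp ρ (Fin (N + 1))) (i : ι)
    (B : Finset (Fin (ρ i))) (w : Fin (ρ i - B.card) → Fin N) :
    interpSplitEquiv ρ N S _ ⟨⟨i, B⟩, rfl⟩ w = S _ ⟨i, rfl⟩ (finSuccEquivLast.symm ∘ fill B w) :=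
  rfl

end Interpretations

section Translation

def eqFormula {L : Language} {α : Type*} : Option (L.Term α) → Option (L.Term α) → L.Formula α
  | none, none => ⊤
  | some t, some t' => t.equal t'
  | _, _ => ⊥

theorem realize_eqFormula {L : Language} {M : Type*} [L.Structure M] {α : Type*}
    (a b : Option (L.Term α)) (v : α → M) :
    (eqFormula a b).Realize v ↔ a.map (Term.realize v) = b.map (Term.realize v) := by
  cases a <;> cases b <;> simp [eqFormula]

variable {ι : Type} {ρ : ι → ℕ} {ℓ : ℕ}

abbrev τ (ρ : ι → ℕ) (ℓ : ℕ) : Language := cLang (ℓ + 1) (arels ρ)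

abbrev τ' (ρ : ι → ℕ) (ℓ : ℕ) : Language := cLang ℓ (arels (splitArity ρ))

def constAtom {α : Type} : Fin (ℓ + 1) → Option ((τ' ρ ℓ).Term α) :=
  Fin.lastCases none fun c => some (Constants.term (L := τ' ρ ℓ) c)

def termAtom {α : Type} {m : ℕ} (s : Fin m → Option α) :
    (τ ρ ℓ).Term (Empty ⊕ Fin m) → Option ((τ' ρ ℓ).Term α)
  | .var (.inl e) => e.elim
  | .var (.inr i) => (s i).map Term.var
  | @Term.func _ _ 0 c _ => constAtom c
  | @Term.func _ _ (_ + 1) f _ => f.elim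

noncomputable def relFormula {α : Type} (i : ι) (as : Fin (ρ i) → Option ((τ' ρ ℓ).Term α)) :
    (τ' ρ ℓ).Formula α :=
  let A : Finset (Fin (ρ i)) := Finset.univ.filter fun j => (as j).isNone
  Relations.formula (L := τ' ρ ℓ) (n := ρ i - A.card) ⟨⟨i, A⟩, rfl⟩
    fun j => (as (complEquiv A j)).get <| by
      simpa [A, Option.isSome_iff_ne_none] using Finset.mem_compl.1 (complEquiv A j).2

/-- In `translate s ψ` a bound variable `x` of `ψ` denotes the point `Fin.last` of the large
universe (the value of the removed constant) if `s x = none`, and the value of the free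
variable `a` of the translation if `s x = some a`. -/
noncomputable def translate : ∀ {α : Type} {m : ℕ}, (Fin m → Option α) →
    (τ ρ ℓ).BoundedFormula Empty m → (τ' ρ ℓ).Formula α
  | _, _, _, .falsum => ⊥
  | _, _, s, .equal t₁ t₂ => eqFormula (termAtom s t₁) (termAtom s t₂)
  | _, _, s, .rel ⟨i, rfl⟩ ts => relFormula i fun j => termAtom s (ts j)
  | _, _, s, .imp ψ₁ ψ₂ => (translate s ψ₁).imp (translate s ψ₂)
  | _, _, s, .all ψ => translate (Fin.snoc s none) ψ ⊓
      Formula.iAlls Unit (translate (Fin.snoc (Option.map Sum.inl ∘ s) (some (Sum.inr ()))) ψ)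

end Translation

section Semantics

variable {ι : Type} {ρ : ι → ℕ} {ℓ N : ℕ}

def withLast (c : Fin ℓ → Fin N) : Fin (ℓ + 1) → Fin (N + 1) :=
  Fin.lastCases (Fin.last N) fun i => (c i).castSucc

def decodeVal {α : Type} {m : ℕ} (s : Fin m → Option α) (w : α → Fin N) : Fin m → Fin (N + 1) :=
  fun i => finSuccEquivLast.symm ((s i).map w)

theorem realize_termAtom (c : Fin ℓ → Fin N) (S : Interp ρ (Fin (N + 1)))
    (S' : Interp (splitArity ρ) (Fin N)) {α : Type} {m : ℕ} (s : Fin m → Option α)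
    (w : α → Fin N) (t : (τ ρ ℓ).Term (Empty ⊕ Fin m)) :
    letI := cLang.mkStructure (withLast c) S
    letI := cLang.mkStructure c S'
    t.realize (Sum.elim Empty.elim (decodeVal s w)) =
      finSuccEquivLast.symm ((termAtom s t).map (Term.realize w)) := by
  match t with
  | .var (.inl e) => exact e.elim
  | .var (.inr i) => cases h : s i <;> simp [termAtom, decodeVal, h]
  | @Term.func _ _ 0 k _ =>
    induction k using Fin.lastCases with
    | last =>
      show withLast c (Fin.last ℓ) = _
      simp [termAtom, constAtom, withLast]
    | cast k =>
      show withLast c k.castSucc = _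
      simp [termAtom, constAtom, withLast]
      rfl
  | @Term.func _ _ (_ + 1) f _ => exact f.elim

theorem realize_relFormula (c : Fin ℓ → Fin N) (S : Interp ρ (Fin (N + 1))) {α : Type} (i : ι)
    (as : Fin (ρ i) → Option ((τ' ρ ℓ).Term α)) (w : α → Fin N) :
    letI := cLang.mkStructure c (interpSplitEquiv ρ N S)
    (relFormula i as).Realize w ↔
      S _ ⟨i, rfl⟩ fun j => finSuccEquivLast.symm ((as j).map (Term.realize w)) := by
  let _ := cLang.mkStructure c (interpSplitEquiv ρ N S)
  refine (interpSplitEquiv_apply S i (Finset.univ.filter fun j => (as j).isNone) _).to_iff.trans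
    ?_
  rw [fill_eq (v := fun j => (as j).map (Term.realize w)) (fun j => by simp)
    fun j => by simpa using ⟨_, (Option.some_get _).symm, rfl⟩]
  rfl

theorem decodeVal_snoc_none {α : Type} {m : ℕ} (s : Fin m → Option α) (w : α → Fin N) :
    decodeVal (Fin.snoc s none) w = Fin.snoc (decodeVal s w) (Fin.last N) := by
  funext i
  induction i using Fin.lastCases <;> simp [decodeVal]

theorem decodeVal_snoc_some {α β : Type} {m : ℕ} (s : Fin m → Option α) (w : α → Fin N)
    (f : β → Fin N) (b : β) :
    decodeVal (Fin.snoc (Option.map Sum.inl ∘ s) (some (Sum.inr b))) (Sum.elim w f) =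
      Fin.snoc (decodeVal s w) (f b).castSucc := by
  funext i
  induction i using Fin.lastCases <;> simp [decodeVal, Option.map_map]

theorem realize_translate (c : Fin ℓ → Fin N) (S : Interp ρ (Fin (N + 1))) {α : Type} {m : ℕ}
    (s : Fin m → Option α) (ψ : (τ ρ ℓ).BoundedFormula Empty m) (w : α → Fin N) :
    letI := cLang.mkStructure (withLast c) S
    letI := cLang.mkStructure c (interpSplitEquiv ρ N S)
    ψ.Realize Empty.elim (decodeVal s w) ↔ (translate s ψ).Realize w := by
  let _ := cLang.mkStructure (withLast c) S
  let _ := cLang.mkStructure c (interpSplitEquiv ρ N S)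
  induction ψ generalizing α with
  | falsum => exact Iff.rfl
  | equal t₁ t₂ =>
    rw [translate, realize_eqFormula, ← finSuccEquivLast.symm.injective.eq_iff,
      ← realize_termAtom c S, ← realize_termAtom c S]
    exact Iff.rfl
  | rel R ts =>
    obtain ⟨i, rfl⟩ := R
    rw [translate, realize_relFormula]
    simp only [← realize_termAtom c S (interpSplitEquiv ρ N S)]
    exact Iff.rfl
  | imp ψ₁ ψ₂ ih₁ ih₂ => simp [translate, ih₁, ih₂]
  | all ψ ih =>
    rw [BoundedFormula.realize_all, Fin.forall_fin_succ', translate, Formula.realize_inf,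
      Formula.realize_iAlls, and_comm]
    refine and_congr ?_ ?_
    · rw [← decodeVal_snoc_none]
      exact ih _ _
    · refine (forall_congr' fun y => ?_).trans ⟨fun h f => h (f ()), fun h y => h fun _ => y⟩
      rw [← decodeVal_snoc_some s w (fun _ : Unit => y) ()]
      exact ih _ _

theorem realize_translate_sentence (c : Fin ℓ → Fin N) (S : Interp ρ (Fin (N + 1)))
    (φ : (τ ρ ℓ).Sentence) :
    (letI := cLang.mkStructure (withLast c) S; Fin (N + 1) ⊨ φ) ↔
      (letI := cLang.mkStructure c (interpSplitEquiv ρ N S); Fin N ⊨ translate Fin.elim0 φ) := by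
  let _ := cLang.mkStructure (withLast c) S
  let _ := cLang.mkStructure c (interpSplitEquiv ρ N S)
  refine Iff.trans ?_ (realize_translate c S (Fin.elim0 : Fin 0 → Option Empty) φ default)
  unfold Sentence.Realize Formula.Realize
  congr!

end Semantics

end ConstantRemoval

open ConstantRemoval

theorem remove_single_constant_higher_arity_general (ι : Type) (ρ : ι → ℕ) (ℓ : ℕ)
    (φ : (cLang (ℓ + 1) (arels ρ)).Sentence) :
    ∃ φ' : (cLang ℓ (arels (fun p : (i : ι) × Finset (Fin (ρ i)) =>
        ρ p.1 - p.2.card))).Sentence,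
      ∀ n : ℕ, fCount (ℓ + 1) φ n = fCount ℓ φ' n := by
  refine ⟨translate Fin.elim0 φ, fun n => Nat.card_congr <|
    (interpSplitEquiv ρ (n + ℓ)).subtypeEquiv fun S => ?_⟩
  have hc : (fun i : Fin (ℓ + 1) => Fin.natAdd n i) = withLast fun i => Fin.natAdd n i := by
    funext i
    induction i using Fin.lastCases <;> simp [withLast]
  rw [hc]
  exact realize_translate_sentence _ S φ

/-- **Removing a single constant with higher arities.**
Let τ have ℓ+1 constant symbols and relation symbols indexed by the finite type ι with
arities ρ.  Let τ' have the constant symbols a₁,…,a_ℓ and, for each i : ι and each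
subset A ⊆ [ρ i], a relation symbol R_{i,A} of arity ρ i − |A| (R_{i,∅} being identified
with R_i).  Then there is a single first-order sentence φ' over τ' with
f_φ(n) = f_{φ'}(n) for all n.  In particular τ' has the same maximum arity as τ and no
new relation symbols of that maximum arity. -/
theorem remove_single_constant_higher_arity (ι : Type) [Fintype ι] (ρ : ι → ℕ) (ℓ : ℕ)
    (φ : (cLang (ℓ + 1) (arels ρ)).Sentence) :
    ∃ φ' : (cLang ℓ (arels (fun p : (i : ι) × Finset (Fin (ρ i)) =>
        ρ p.1 - p.2.card))).Sentence,
      ∀ n : ℕ, fCount (ℓ + 1) φ n = fCount ℓ φ' n :=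
  remove_single_constant_higher_arity_general ι ρ ℓ φ
end
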